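/- Under assumptions (iv), (v), (vi) with B' = 𝒳', suppose in addition that X' is measurable from 𝒜 to ℬ' and that P(C) > 0 (note C = {X' ∈ 𝒳'} ∩ C ∈ 𝒜 by (v)). Then X' and X are conditionally independent given C and the conditional law of X given C is π: for every B ∈ ℬ and F ∈ ℬ', P({X' ∈ F} ∩ {X ∈ B} | C) = P(X' ∈ F | C) · P(X ∈ B | C), and P(X ∈ B | C) = π(B). (Corollary 6.3 of the paper.) -/

import Mathlib

open MeasureTheory ProbabilityTheory

section CondMeasure

variable {Ω : Type*} [MeasurableSpace Ω] {μ : Measure Ω} [IsFiniteMeasure μ] {s t : Set Ω}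

theorem measure_inter_eq_mul_of_cond_eq (hs : MeasurableSet s) (h : μ s ≠ 0 → μ[t | s] = μ t) :
    μ (s ∩ t) = μ s * μ t := by
  by_cases hμs : μ s = 0
  · simp [hμs, measure_inter_null_of_null_left]
  · rw [← cond_mul_eq_inter hs, h hμs, mul_comm]

theorem cond_eq_of_measure_inter_eq_mul (hs : MeasurableSet s) (hμs : μ s ≠ 0) {c : ENNReal}
    (h : μ (s ∩ t) = c * μ s) : μ[t | s] = c := by
  rw [cond_apply hs, h, mul_comm c, ← mul_assoc, ENNReal.inv_mul_cancel hμs (measure_ne_top _ _),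
    one_mul]

end CondMeasure

theorem stmt2_general
    {Ω 𝓧 𝓧' : Type*} [MeasurableSpace Ω] [MeasurableSpace 𝓧] [MeasurableSpace 𝓧']
    (P : Measure Ω) [IsProbabilityMeasure P]
    (π : Measure 𝓧)
    (X : Ω → 𝓧) (X' : Ω → 𝓧') (Y : Ω → 𝓧') (C : Set Ω)
    -- (iv): X is measurable with law π
    (hXmeas : Measurable X) (hXlaw : P.map X = π)
    -- (v) with B' = 𝒳'
    (hv : ∀ F : Set 𝓧', MeasurableSet F →
      MeasurableSet (X' ⁻¹' F ∩ C) ∧ MeasurableSet (Y ⁻¹' F ∩ C))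
    -- (vi) with B' = 𝒳'
    (hvi : ∀ F : Set 𝓧', MeasurableSet F → ∀ B : Set 𝓧, MeasurableSet B → 0 < π B →
      P[X' ⁻¹' F ∩ C | X ⁻¹' B] = P (Y ⁻¹' F ∩ C))
    -- P(C) > 0
    (hpos : 0 < P C) :
    (∀ B : Set 𝓧, MeasurableSet B → ∀ F : Set 𝓧', MeasurableSet F →
        P[X' ⁻¹' F ∩ X ⁻¹' B | C] = P[X' ⁻¹' F | C] * P[X ⁻¹' B | C]) ∧
      (∀ B : Set 𝓧, MeasurableSet B → P[X ⁻¹' B | C] = π B) := by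
  have hC : MeasurableSet C := by simpa using (hv Set.univ .univ).1
  have hXB : ∀ B, MeasurableSet B → P (X ⁻¹' B) = π B := fun B hB => by
    rw [← hXlaw, Measure.map_apply hXmeas hB]
  -- (vi) at `B = 𝒳` turns `P (Y ⁻¹' F ∩ C)` into `P (X' ⁻¹' F ∩ C)`, so (vi) says that
  -- `X ⁻¹' B` is independent of `X' ⁻¹' F ∩ C`.
  have hindep : ∀ F, MeasurableSet F → ∀ B, MeasurableSet B →
      P (X ⁻¹' B ∩ (X' ⁻¹' F ∩ C)) = π B * P (X' ⁻¹' F ∩ C) := by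
    intro F hF B hB
    have hπ : 0 < π Set.univ := by simp [← hXB _ .univ]
    rw [← hXB B hB]
    refine measure_inter_eq_mul_of_cond_eq (hXmeas hB) fun hB0 => ?_
    rw [hvi F hF B hB (hXB B hB ▸ pos_iff_ne_zero.2 hB0), ← hvi F hF _ .univ hπ,
      Set.preimage_univ, cond_univ]
  have hlaw : ∀ B, MeasurableSet B → P[X ⁻¹' B | C] = π B := fun B hB =>
    cond_eq_of_measure_inter_eq_mul hC hpos.ne' <| by
      simpa [Set.inter_comm] using hindep _ .univ B hB
  refine ⟨fun B hB F hF => cond_eq_of_measure_inter_eq_mul hC hpos.ne' ?_, hlaw⟩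
  calc P (C ∩ (X' ⁻¹' F ∩ X ⁻¹' B)) = π B * P (X' ⁻¹' F ∩ C) := by
        rw [← hindep F hF B hB, Set.inter_comm C, Set.inter_comm (X' ⁻¹' F), Set.inter_assoc]
    _ = P[X' ⁻¹' F | C] * P[X ⁻¹' B | C] * P C := by
        rw [hlaw B hB, mul_right_comm, cond_mul_eq_inter hC, Set.inter_comm, mul_comm]

/-- Corollary 6.3 of Fill–Machida–Murdoch–Rosenthal:
under assumptions (iv), (v), (vi) with `B' = 𝒳'`, if moreover `X'` is measurable
and `P(C) > 0`, then `X'` and `X` are conditionally independent given `C`,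
and the conditional law of `X` given `C` is `π`. -/
theorem stmt2
    {Ω 𝓧 𝓧' : Type*} [MeasurableSpace Ω] [MeasurableSpace 𝓧] [MeasurableSpace 𝓧']
    (P : Measure Ω) [IsProbabilityMeasure P]
    (π : Measure 𝓧) [IsProbabilityMeasure π]
    (X : Ω → 𝓧) (X' : Ω → 𝓧') (Y : Ω → 𝓧') (C : Set Ω)
    -- (iv): X is measurable with law π
    (hXmeas : Measurable X) (hXlaw : P.map X = π)
    -- (v) with B' = 𝒳'
    (hv : ∀ F : Set 𝓧', MeasurableSet F →
      MeasurableSet (X' ⁻¹' F ∩ C) ∧ MeasurableSet (Y ⁻¹' F ∩ C))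
    -- (vi) with B' = 𝒳'
    (hvi : ∀ F : Set 𝓧', MeasurableSet F → ∀ B : Set 𝓧, MeasurableSet B → 0 < π B →
      P[X' ⁻¹' F ∩ C | X ⁻¹' B] = P (Y ⁻¹' F ∩ C))
    -- X' is measurable
    (hX'meas : Measurable X')
    -- P(C) > 0
    (hpos : 0 < P C) :
    (∀ B : Set 𝓧, MeasurableSet B → ∀ F : Set 𝓧', MeasurableSet F →
        P[X' ⁻¹' F ∩ X ⁻¹' B | C] = P[X' ⁻¹' F | C] * P[X ⁻¹' B | C]) ∧
      (∀ B : Set 𝓧, MeasurableSet B → P[X ⁻¹' B | C] = π B) :=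
  stmt2_general P π X X' Y C hXmeas hXlaw hv hvi hpos
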